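/- arXiv:1311.3367 — 6 statements merged into one kernel-verified Lean document; each statement's English description precedes it below -/
import Mathlib

section
/- If u is a positive function on the vertices of a weighted graph and Δu(x)=0 at some vertex x, then Γ(√u)(x) ≤ (deg(x)/μ(x))·u(x). -/
open Real Finset MeasureTheory

variable {V : Type*}

/-- The μ-Laplacian of a weighted graph. -/
noncomputable def lapl (N : V → Finset V) (w : V → V → ℝ) (μ : V → ℝ)
    (f : V → ℝ) (x : V) : ℝ :=
  (1 / μ x) * ∑ y ∈ N x, w x y * (f y - f x)

/-- The carré du champ operator Γ. -/
noncomputable def gam (N : V → Finset V) (w : V → V → ℝ) (μ : V → ℝ)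
    (f g : V → ℝ) (x : V) : ℝ :=
  (1 / (2 * μ x)) * ∑ y ∈ N x, w x y * (f y - f x) * (g y - g x)

/-- The weighted degree. -/
noncomputable def deg (N : V → Finset V) (w : V → V → ℝ) (x : V) : ℝ :=
  ∑ y ∈ N x, w x y

/-- The operator Γ̃₂ of Bauer et al. -/
noncomputable def gam2 (N : V → Finset V) (w : V → V → ℝ) (μ : V → ℝ)
    (f : V → ℝ) (x : V) : ℝ :=
  (1 / 2) * lapl N w μ (gam N w μ f f) x
    - gam N w μ f (fun y => lapl N w μ (fun z => f z ^ 2) y / (2 * f y)) x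

theorem gam_sqrt_le_of_harmonic_point (N : V → Finset V) (w : V → V → ℝ) (μ : V → ℝ)
    (hμ : ∀ x, 0 < μ x) (hw : ∀ x y, y ∈ N x → 0 < w x y)
    (u : V → ℝ) (hu : ∀ x, 0 < u x) (x : V)
    (hx : lapl N w μ u x = 0) :
    gam N w μ (fun y => Real.sqrt (u y)) (fun y => Real.sqrt (u y)) x
      ≤ (deg N w x / μ x) * u x := by
  have hμx := hμ x
  have hsum : ∑ y ∈ N x, w x y * (u y - u x) = 0 := by
    unfold lapl at hx
    rcases mul_eq_zero.mp hx with h | h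
    · exact absurd h (by positivity)
    · exact h
  have key : ∀ y ∈ N x,
      w x y * (Real.sqrt (u y) - Real.sqrt (u x)) * (Real.sqrt (u y) - Real.sqrt (u x))
        ≤ w x y * (u y + u x) := by
    intro y hy
    have hw' := (hw x y hy).le
    have hy' := (hu y).le
    have hx' := (hu x).le
    nlinarith [Real.sq_sqrt hy', Real.sq_sqrt hx',
      mul_nonneg (Real.sqrt_nonneg (u y)) (Real.sqrt_nonneg (u x)),
      sq_nonneg (Real.sqrt (u y) - Real.sqrt (u x))]
  have hS : ∑ y ∈ N x, w x y * (Real.sqrt (u y) - Real.sqrt (u x)) *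
      (Real.sqrt (u y) - Real.sqrt (u x)) ≤ 2 * deg N w x * u x := by
    calc _ ≤ ∑ y ∈ N x, w x y * (u y + u x) := Finset.sum_le_sum key
    _ = ∑ y ∈ N x, (w x y * (u y - u x) + 2 * (w x y * u x)) := by
        apply Finset.sum_congr rfl; intro y _; ring
    _ = 2 * deg N w x * u x := by
        rw [Finset.sum_add_distrib, hsum, ← Finset.mul_sum, ← Finset.sum_mul]
        unfold deg; ring
  unfold gam
  simp only
  calc (1 / (2 * μ x) * ∑ y ∈ N x, w x y * (Real.sqrt (u y) - Real.sqrt (u x)) *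
      (Real.sqrt (u y) - Real.sqrt (u x)))
      ≤ 1 / (2 * μ x) * (2 * deg N w x * u x) := by
        apply mul_le_mul_of_nonneg_left hS; positivity
    _ = deg N w x / μ x * u x := by field_simp
end

section
/- Strong maximum principle on finite graphs: Let G=(V,E) be a finite weighted graph, let S ⊆ V×(0,T] be any subset, and let F: V×[0,T] → ℝ be continuous in t and differentiable in t. Suppose (ΔF − ∂_t F)(x,t) > 0 for all (x,t) ∈ S, F(x,0) ≤ 0 for all x ∈ V, and F(x,t) ≤ 0 for all (x,t) ∉ S with t>0. Then F(x,t) ≤ 0 for all (x,t) ∈ V×[0,T]. -/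
open Real Finset MeasureTheory

variable {V : Type*}

open Topology in
theorem strong_maximum_principle [Fintype V]
    (N : V → Finset V) (w : V → V → ℝ) (μ : V → ℝ)
    (hμ : ∀ x, 0 < μ x) (hw : ∀ x y, y ∈ N x → 0 < w x y)
    (T : ℝ) (hT : 0 < T) (S : Set (V × ℝ))
    (hS : ∀ p ∈ S, 0 < p.2 ∧ p.2 ≤ T)
    (F F' : V → ℝ → ℝ)
    (hcont : ∀ x, ContinuousOn (F x) (Set.Icc 0 T))
    (hderiv : ∀ x, ∀ t ∈ Set.Icc (0:ℝ) T,
      HasDerivWithinAt (F x) (F' x t) (Set.Icc 0 T) t)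
    (hpos : ∀ p ∈ S, 0 < lapl N w μ (fun y => F y p.2) p.1 - F' p.1 p.2)
    (h0 : ∀ x, F x 0 ≤ 0)
    (hcomp : ∀ x t, 0 < t → t ≤ T → (x, t) ∉ S → F x t ≤ 0) :
    ∀ x, ∀ t ∈ Set.Icc (0:ℝ) T, F x t ≤ 0 := by

  -- Handle the empty case
  intro x₀ t₀ ht₀
  -- Each `F x` attains a max on the compact interval
  have hmax : ∀ x : V, ∃ t ∈ Set.Icc (0:ℝ) T, ∀ s ∈ Set.Icc (0:ℝ) T, F x s ≤ F x t := by
    intro x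
    obtain ⟨t, ht, hmax⟩ := isCompact_Icc.exists_isMaxOn (Set.nonempty_Icc.2 hT.le) (hcont x)
    exact ⟨t, ht, fun s hs => hmax hs⟩
  choose τ hτ hτmax using hmax
  -- pick x maximizing F x (τ x)
  have : Nonempty V := ⟨x₀⟩
  obtain ⟨a, ha⟩ := Finite.exists_max (fun x : V => F x (τ x))
  set b := τ a with hb
  have hbmem : b ∈ Set.Icc (0:ℝ) T := hτ a
  have hglob : ∀ x, ∀ t ∈ Set.Icc (0:ℝ) T, F x t ≤ F a b :=
    fun x t ht => (hτmax x t ht).trans (ha x)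
  -- it suffices to show F a b ≤ 0
  suffices h : F a b ≤ 0 by exact (hglob x₀ t₀ ht₀).trans h
  by_contra hpos0
  push_neg at hpos0
  have hb0 : 0 < b := by
    rcases lt_or_eq_of_le hbmem.1 with h | h
    · exact h
    · exact absurd (h ▸ h0 a) (not_le.2 (h ▸ hpos0))
  by_cases hmem : (a, b) ∈ S
  · -- Laplacian at the max is ≤ 0
    have hlap : lapl N w μ (fun y => F y b) a ≤ 0 := by
      unfold lapl
      apply mul_nonpos_of_nonneg_of_nonpos
      · have := hμ a; positivity
      · apply Finset.sum_nonpos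
        intro y hy
        exact mul_nonpos_of_nonneg_of_nonpos (hw a y hy).le
          (sub_nonpos.2 (hglob y b hbmem))
    have hF' : F' a b < 0 := by
      have := hpos (a, b) hmem
      simp only at this
      linarith
    -- but the (left) derivative at a max with b > 0 is ≥ 0
    have hd : HasDerivWithinAt (F a) (F' a b) (Set.Ico 0 b) b :=
      (hderiv a b hbmem).mono (fun t ht => ⟨ht.1, ht.2.le.trans hbmem.2⟩)
    have hslope : Filter.Tendsto (slope (F a) b) (𝓝[(Set.Ico 0 b) \ {b}] b) (𝓝 (F' a b)) :=
      hasDerivWithinAt_iff_tendsto_slope.1 hd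
    have hne : (𝓝[(Set.Ico 0 b) \ {b}] b).NeBot := by
      have hdiff : Set.Ico 0 b \ {b} = Set.Ico 0 b := by
        ext t; simp only [Set.mem_diff, Set.mem_Ico, Set.mem_singleton_iff]
        constructor
        · exact fun h => h.1
        · exact fun h => ⟨h, ne_of_lt h.2⟩
      rw [hdiff, ← mem_closure_iff_nhdsWithin_neBot, closure_Ico (ne_of_lt hb0)]
      exact ⟨hb0.le, le_refl b⟩
    have h0le : 0 ≤ F' a b := by
      refine ge_of_tendsto hslope ?_
      filter_upwards [self_mem_nhdsWithin] with t ht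
      have ht' : t ∈ Set.Ico 0 b := ht.1
      have h1 : F a t - F a b ≤ 0 := by
        have : t ∈ Set.Icc (0:ℝ) T := ⟨ht'.1, ht'.2.le.trans hbmem.2⟩
        linarith [hglob a t this]
      have h2 : t - b ≤ 0 := by linarith [ht'.2]
      simpa [slope_def_field, div_eq_div_iff] using div_nonneg_of_nonpos h1 h2
    linarith
  · exact absurd (hcomp a b hb0 hbmem.2 hmem) (not_le.2 hpos0)
end

section
/- Maximum principle on infinite graphs: Let G=(V,E) be an infinite weighted graph with D_μ := sup_x deg(x)/μ(x) < ∞, let S ⊆ V×(0,T] be any subset, and let F: V×[0,T] → ℝ be continuous and differentiable in t and bounded above with supremum attained in time at t=t* for each vertex in the sense of the construction. Suppose (ΔF − ∂_t F)(x,t) ≥ 0 for all (x,t) ∈ S, F(x,0) ≤ 0 for all x ∈ V, and F(x,t) ≤ 0 for all (x,t) ∉ S with t>0. Then F(x,t) ≤ 0 for all (x,t) ∈ V×[0,T]. -/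
open Real Finset MeasureTheory

variable {V : Type*}

set_option maxHeartbeats 1000000 in
theorem maximum_principle_infinite [Infinite V]
    (N : V → Finset V) (w : V → V → ℝ) (μ : V → ℝ)
    (hμ : ∀ x, 0 < μ x) (hw : ∀ x y, y ∈ N x → 0 < w x y)
    (ωmin : ℝ) (hωmin : 0 < ωmin) (hωe : ∀ x y, y ∈ N x → ωmin ≤ w x y)
    (Dμ : ℝ) (hDμ : ∀ x, deg N w x / μ x ≤ Dμ)
    (T : ℝ) (hT : 0 < T) (S : Set (V × ℝ))
    (hS : ∀ p ∈ S, 0 < p.2 ∧ p.2 ≤ T)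
    (F F' : V → ℝ → ℝ)
    (hcont : ∀ x, ContinuousOn (F x) (Set.Icc 0 T))
    (hderiv : ∀ x, ∀ t ∈ Set.Icc (0:ℝ) T,
      HasDerivWithinAt (F x) (F' x t) (Set.Icc 0 T) t)
    (hbdd : BddAbove {r : ℝ | ∃ x, ∃ t ∈ Set.Icc (0:ℝ) T, F x t = r})
    (hstar : ∃ tstar ∈ Set.Icc (0:ℝ) T,
      ∀ y, ∀ t ∈ Set.Icc (0:ℝ) T, F y t ≤ F y tstar)
    (hpos : ∀ p ∈ S, 0 ≤ lapl N w μ (fun y => F y p.2) p.1 - F' p.1 p.2)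
    (h0 : ∀ x, F x 0 ≤ 0)
    (hcomp : ∀ x t, 0 < t → t ≤ T → (x, t) ∉ S → F x t ≤ 0) :
    ∀ x, ∀ t ∈ Set.Icc (0:ℝ) T, F x t ≤ 0 := by
  have hV : Nonempty V := inferInstance
  obtain ⟨v⟩ := hV
  have hdeg_nonneg : ∀ z, 0 ≤ deg N w z := fun z =>
    Finset.sum_nonneg fun y hy => (hw z y hy).le
  have hDm0 : 0 ≤ Dμ :=
    le_trans (div_nonneg (hdeg_nonneg v) (hμ v).le) (hDμ v)
  intro x₀ t₀ ht₀
  by_contra hF0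
  push_neg at hF0
  set A : Set ℝ := {r : ℝ | ∃ x, ∃ t ∈ Set.Icc (0:ℝ) T, Real.exp (-t) * F x t = r} with hA
  have hAne : A.Nonempty := ⟨Real.exp (-t₀) * F x₀ t₀, x₀, t₀, ht₀, rfl⟩
  have hAbdd : BddAbove A := by
    obtain ⟨C, hC⟩ := hbdd
    refine ⟨max C 0, ?_⟩
    rintro r ⟨x, t, ht, rfl⟩
    have hFC : F x t ≤ C := hC ⟨x, t, ht, rfl⟩
    have he1 : Real.exp (-t) ≤ 1 := Real.exp_le_one_iff.mpr (by linarith [ht.1])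
    have he0 : 0 < Real.exp (-t) := Real.exp_pos _
    rcases le_or_gt (F x t) 0 with h | h
    · have : Real.exp (-t) * F x t ≤ 0 := mul_nonpos_of_nonneg_of_nonpos he0.le h
      exact le_trans this (le_max_right C 0)
    · have : Real.exp (-t) * F x t ≤ F x t := by nlinarith
      exact le_trans (le_trans this hFC) (le_max_left C 0)
  set M := sSup A with hMdef
  have hHle : ∀ x, ∀ t, t ∈ Set.Icc (0:ℝ) T → Real.exp (-t) * F x t ≤ M :=
    fun x t ht => le_csSup hAbdd ⟨x, t, ht, rfl⟩
  have hM : 0 < M :=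
    lt_of_lt_of_le (mul_pos (Real.exp_pos _) hF0) (hHle x₀ t₀ ht₀)
  have hX0 : 0 ≤ Dμ * Real.exp T := mul_nonneg hDm0 (Real.exp_pos T).le
  have hKpos : 0 < 4 * (1 + Dμ * Real.exp T) := by linarith
  set ε := M / (4 * (1 + Dμ * Real.exp T)) with hεdef
  have hε : 0 < ε := div_pos hM hKpos
  have hεK : 2 * ε * (1 + Dμ * Real.exp T) = M / 2 := by
    rw [hεdef]; field_simp; ring
  have h2ε : 2 * ε ≤ M / 2 := by nlinarith
  have hM2ε : 0 < M - 2 * ε := by linarith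
  obtain ⟨r, hrA, hr⟩ := exists_lt_of_lt_csSup hAne (show M - ε < M by linarith)
  obtain ⟨x, t, htI, hrt⟩ := hrA
  rw [← hrt] at hr
  have htpos : 0 < t := by
    rcases lt_or_eq_of_le htI.1 with h | h
    · exact h
    · exfalso
      rw [← h] at hr
      simp only [neg_zero, Real.exp_zero, one_mul] at hr
      linarith [h0 x]
  set B : Set ℝ := Set.Icc 0 t ∩ (fun s => Real.exp (-s) * F x s) ⁻¹' Set.Iic (M - 2 * ε)
    with hBdef
  have hcont' : ContinuousOn (fun s => Real.exp (-s) * F x s) (Set.Icc 0 t) :=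
    ((Real.continuous_exp.comp continuous_neg).continuousOn).mul
      ((hcont x).mono (Set.Icc_subset_Icc le_rfl htI.2))
  have hBclosed : IsClosed B :=
    hcont'.preimage_isClosed_of_isClosed isClosed_Icc isClosed_Iic
  have hB0 : (0:ℝ) ∈ B := by
    constructor
    · exact ⟨le_rfl, htpos.le⟩
    · simp only [Set.mem_preimage, Set.mem_Iic, neg_zero, Real.exp_zero, one_mul]
      linarith [h0 x]
  have hBbdd : BddAbove B := BddAbove.mono Set.inter_subset_left bddAbove_Icc
  set t₁ := sSup B with ht₁def
  have ht₁B : t₁ ∈ B := hBclosed.csSup_mem ⟨0, hB0⟩ hBbdd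
  have ht₁0 : 0 ≤ t₁ := ht₁B.1.1
  have ht₁h : Real.exp (-t₁) * F x t₁ ≤ M - 2 * ε := ht₁B.2
  have ht₁t : t₁ < t := lt_of_le_of_ne ht₁B.1.2 (by
    intro h; rw [h] at ht₁h; linarith)
  have habove : ∀ s, t₁ < s → s ≤ t → M - 2 * ε < Real.exp (-s) * F x s := by
    intro s hs1 hs2
    by_contra hle
    push_neg at hle
    have hsB : s ∈ B := ⟨⟨le_trans ht₁0 hs1.le, hs2⟩, hle⟩
    exact absurd (le_csSup hBbdd hsB) (not_le.mpr hs1)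
  have hMVT := exists_hasDerivAt_eq_slope (fun s => Real.exp (-s) * F x s)
    (fun s => Real.exp (-s) * (-1) * F x s + Real.exp (-s) * F' x s) ht₁t
    (hcont'.mono (Set.Icc_subset_Icc ht₁0 le_rfl))
    (fun s hs => by
      have hs0 : 0 < s := lt_of_le_of_lt ht₁0 hs.1
      have hsT : s < T := lt_of_lt_of_le hs.2 htI.2
      have hFd : HasDerivAt (F x) (F' x s) s :=
        (hderiv x s ⟨hs0.le, hsT.le⟩).hasDerivAt (Icc_mem_nhds hs0 hsT)
      have hed : HasDerivAt (fun u : ℝ => Real.exp (-u)) (Real.exp (-s) * (-1)) s := by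
        have h1 : HasDerivAt (fun u : ℝ => -u) (-1) s := (hasDerivAt_id s).neg
        exact (Real.hasDerivAt_exp (-s)).comp s h1
      exact hed.mul hFd)
  obtain ⟨c, hcmem, hcslope⟩ := hMVT
  have hc0 : 0 < c := lt_of_le_of_lt ht₁0 hcmem.1
  have hcT : c ≤ T := le_trans hcmem.2.le htI.2
  have hcIcc : c ∈ Set.Icc (0:ℝ) T := ⟨hc0.le, hcT⟩
  have hslope_pos :
      0 < (Real.exp (-t) * F x t - Real.exp (-t₁) * F x t₁) / (t - t₁) :=
    div_pos (by linarith) (by linarith)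
  have hderiv_pos : 0 < Real.exp (-c) * (-1) * F x c + Real.exp (-c) * F' x c := by
    rw [hcslope]; exact hslope_pos
  have hFc' : F x c < F' x c := by
    by_contra hle
    push_neg at hle
    have h8 : 0 ≤ F x c - F' x c := by linarith
    have h9 := mul_nonneg (Real.exp_pos (-c)).le h8
    nlinarith
  have hhc : M - 2 * ε < Real.exp (-c) * F x c := habove c hcmem.1 hcmem.2.le
  have hee : Real.exp c * Real.exp (-c) = 1 := by rw [← Real.exp_add]; simp
  have hFeq : Real.exp c * (Real.exp (-c) * F x c) = F x c := by
    rw [← mul_assoc, hee, one_mul]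
  have hexpc1 : 1 ≤ Real.exp c := Real.one_le_exp hc0.le
  have h5 : Real.exp c * (M - 2 * ε) < F x c := by
    have := mul_lt_mul_of_pos_left hhc (Real.exp_pos c)
    rwa [hFeq] at this
  have hFxc : M - 2 * ε < F x c := by
    have h10 := mul_le_mul_of_nonneg_right hexpc1 hM2ε.le
    linarith
  have hxcS : (x, c) ∈ S := by
    by_contra hns
    exact absurd (hcomp x c hc0 hcT hns) (by linarith)
  have hΔ := hpos (x, c) hxcS
  simp only at hΔ
  have hFyle : ∀ y, F y c ≤ Real.exp c * M := by
    intro y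
    have h6 := hHle y c hcIcc
    have h7 := mul_le_mul_of_nonneg_left h6 (Real.exp_pos c).le
    rw [← mul_assoc, hee, one_mul] at h7
    exact h7
  have hsum : ∑ y ∈ N x, w x y * (F y c - F x c)
      ≤ deg N w x * (Real.exp c * M - F x c) := by
    rw [deg, Finset.sum_mul]
    apply Finset.sum_le_sum
    intro y hy
    have h1 := hFyle y
    exact mul_le_mul_of_nonneg_left (by linarith) (hw x y hy).le
  have hKnn : 0 ≤ Real.exp c * M - F x c := by
    have := hFyle x; linarith
  have hKle : Real.exp c * M - F x c ≤ Real.exp c * (2 * ε) := by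
    have h11 : Real.exp c * (M - 2 * ε) < F x c := h5
    nlinarith
  have hlapl : lapl N w μ (fun y => F y c) x ≤ Dμ * (Real.exp T * (2 * ε)) := by
    have hdle : deg N w x ≤ Dμ * μ x := (div_le_iff₀ (hμ x)).mp (hDμ x)
    have hecT : Real.exp c ≤ Real.exp T := Real.exp_le_exp.mpr hcT
    have hμx := hμ x
    have hchain : ∑ y ∈ N x, w x y * (F y c - F x c)
        ≤ Dμ * (Real.exp T * (2 * ε)) * μ x := by
      calc ∑ y ∈ N x, w x y * (F y c - F x c)
          ≤ deg N w x * (Real.exp c * M - F x c) := hsum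
        _ ≤ (Dμ * μ x) * (Real.exp c * M - F x c) :=
            mul_le_mul_of_nonneg_right hdle hKnn
        _ ≤ (Dμ * μ x) * (Real.exp c * (2 * ε)) :=
            mul_le_mul_of_nonneg_left hKle (mul_nonneg hDm0 hμx.le)
        _ ≤ (Dμ * μ x) * (Real.exp T * (2 * ε)) :=
            mul_le_mul_of_nonneg_left
              (mul_le_mul_of_nonneg_right hecT (by positivity))
              (mul_nonneg hDm0 hμx.le)
        _ = Dμ * (Real.exp T * (2 * ε)) * μ x := by ring
    show (1 / μ x) * ∑ y ∈ N x, w x y * (F y c - F x c) ≤ Dμ * (Real.exp T * (2 * ε))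
    rw [one_div_mul_eq_div, div_le_iff₀ hμx]
    exact hchain
  have hfinal : M - 2 * ε < Dμ * (Real.exp T * (2 * ε)) := by linarith
  nlinarith
end

section
/- Evolution identity: Let u be a positive solution of ∂_t u = Δu on a weighted graph, and let a, α, φ be C¹ functions of t. Define H = a(t)·((2Γ(√u) − α(t)Δu)/u − φ(t)). Then (Δ − ∂_t)(uH) = 4a(t)·Γ̃₂(√u) + (aα)'·Δu − 2a'(t)·Γ(√u) + (aφ)'·u, where Γ̃₂(f) = (1/2)ΔΓ(f) − Γ(f, Δ(f²)/(2f)). -/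
open Real Finset MeasureTheory

variable {V : Type*}

lemma lapl_lin (N : V → Finset V) (w : V → V → ℝ) (μ : V → ℝ) (c₁ c₂ c₃ : ℝ)
    (p q r : V → ℝ) (x : V) :
    lapl N w μ (fun y => c₁ * p y + c₂ * q y + c₃ * r y) x
      = c₁ * lapl N w μ p x + c₂ * lapl N w μ q x + c₃ * lapl N w μ r x := by
  have key : ∀ y, w x y * ((c₁ * p y + c₂ * q y + c₃ * r y)
        - (c₁ * p x + c₂ * q x + c₃ * r x))
      = c₁ * (w x y * (p y - p x)) + c₂ * (w x y * (q y - q x))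
        + c₃ * (w x y * (r y - r x)) := fun y => by ring
  simp only [lapl, key, Finset.sum_add_distrib, ← Finset.mul_sum]
  ring

theorem evolution_identity (N : V → Finset V) (w : V → V → ℝ) (μ : V → ℝ)
    (hμ : ∀ x, 0 < μ x) (hw : ∀ x y, y ∈ N x → 0 < w x y)
    (u : V → ℝ → ℝ) (hu : ∀ x t, 0 < u x t)
    (hheat : ∀ x t, HasDerivAt (u x) (lapl N w μ (fun y => u y t) x) t)
    (a α φ a' α' φ' : ℝ → ℝ)
    (ha : ∀ t, HasDerivAt a (a' t) t)
    (hα : ∀ t, HasDerivAt α (α' t) t)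
    (hφ : ∀ t, HasDerivAt φ (φ' t) t)
    (H : V → ℝ → ℝ)
    (hH : ∀ x t, H x t = a t *
      ((2 * gam N w μ (fun y => Real.sqrt (u y t)) (fun y => Real.sqrt (u y t)) x
          - α t * lapl N w μ (fun y => u y t) x) / u x t - φ t)) :
    ∀ x t,
      lapl N w μ (fun y => u y t * H y t) x
          - deriv (fun s => u x s * H x s) t
        = 4 * a t * gam2 N w μ (fun y => Real.sqrt (u y t)) x
            + (a' t * α t + a t * α' t) * lapl N w μ (fun y => u y t) x
            - 2 * a' t * gam N w μ (fun y => Real.sqrt (u y t))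
                (fun y => Real.sqrt (u y t)) x
            + (a' t * φ t + a t * φ' t) * u x t := by
  intro x t
  -- time derivative of the Laplacian of u
  have hL : ∀ y, HasDerivAt (fun s => lapl N w μ (fun z => u z s) y)
      (lapl N w μ (fun z => lapl N w μ (fun z' => u z' t) z) y) t := by
    intro y
    have h := (HasDerivAt.fun_sum (u := N y)
      (fun z _ => ((hheat z t).sub (hheat y t)).const_mul (w y z))).const_mul (1 / μ y)
    exact h
  -- time derivative of sqrt u
  have hsq : ∀ y, HasDerivAt (fun s => Real.sqrt (u y s))
      (lapl N w μ (fun z => u z t) y / (2 * Real.sqrt (u y t))) t :=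
    fun y => (hheat y t).sqrt (hu y t).ne'
  -- time derivative of Γ(√u)
  have hG : HasDerivAt
      (fun s => gam N w μ (fun y => Real.sqrt (u y s)) (fun y => Real.sqrt (u y s)) x)
      (2 * gam N w μ (fun y => Real.sqrt (u y t))
        (fun y => lapl N w μ (fun z => u z t) y / (2 * Real.sqrt (u y t))) x) t := by
    have h := (HasDerivAt.fun_sum (u := N x)
      (fun y _ => (((hsq y).sub (hsq x)).const_mul (w x y)).mul ((hsq y).sub (hsq x)))).const_mul
      (1 / (2 * μ x))
    have heq : 2 * gam N w μ (fun y => Real.sqrt (u y t))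
        (fun y => lapl N w μ (fun z => u z t) y / (2 * Real.sqrt (u y t))) x
        = 1 / (2 * μ x) * ∑ y ∈ N x,
            (w x y * (lapl N w μ (fun z => u z t) y / (2 * Real.sqrt (u y t))
                - lapl N w μ (fun z => u z t) x / (2 * Real.sqrt (u x t)))
              * (Real.sqrt (u y t) - Real.sqrt (u x t))
             + w x y * (Real.sqrt (u y t) - Real.sqrt (u x t))
              * (lapl N w μ (fun z => u z t) y / (2 * Real.sqrt (u y t))
                - lapl N w μ (fun z => u z t) x / (2 * Real.sqrt (u x t)))) := by
      simp only [gam, Finset.mul_sum]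
      refine Finset.sum_congr rfl fun y hy => by ring
    rw [heq]
    exact h
  -- rewrite u*H as a nice function of time
  have hFeq : (fun s => u x s * H x s) = fun s =>
      a s * (2 * gam N w μ (fun y => Real.sqrt (u y s)) (fun y => Real.sqrt (u y s)) x
        - α s * lapl N w μ (fun z => u z s) x - φ s * u x s) := by
    funext s
    have h0 : u x s ≠ 0 := (hu x s).ne'
    rw [hH x s]
    field_simp
  -- the full time derivative
  have hD : HasDerivAt (fun s => u x s * H x s)
      (a' t * (2 * gam N w μ (fun y => Real.sqrt (u y t)) (fun y => Real.sqrt (u y t)) x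
          - α t * lapl N w μ (fun z => u z t) x - φ t * u x t)
       + a t * (2 * (2 * gam N w μ (fun y => Real.sqrt (u y t))
            (fun y => lapl N w μ (fun z => u z t) y / (2 * Real.sqrt (u y t))) x)
          - (α' t * lapl N w μ (fun z => u z t) x
              + α t * lapl N w μ (fun z => lapl N w μ (fun z' => u z' t) z) x)
          - (φ' t * u x t + φ t * lapl N w μ (fun y => u y t) x))) t := by
    rw [hFeq]
    exact (ha t).mul
      (((hG.const_mul 2).sub ((hα t).mul (hL x))).sub ((hφ t).mul (hheat x t)))
  -- rewrite u*H as a nice function of space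
  have hspace : (fun y => u y t * H y t) = fun y =>
      (2 * a t) * gam N w μ (fun z => Real.sqrt (u z t)) (fun z => Real.sqrt (u z t)) y
        + (-(a t * α t)) * lapl N w μ (fun z => u z t) y
        + (-(a t * φ t)) * u y t := by
    funext y
    have h0 : u y t ≠ 0 := (hu y t).ne'
    rw [hH y t]
    field_simp
    ring_nf
  have hlapl : lapl N w μ (fun y => u y t * H y t) x
      = (2 * a t) * lapl N w μ
          (fun y => gam N w μ (fun z => Real.sqrt (u z t)) (fun z => Real.sqrt (u z t)) y) x
        + (-(a t * α t)) * lapl N w μ (fun y => lapl N w μ (fun z => u z t) y) x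
        + (-(a t * φ t)) * lapl N w μ (fun y => u y t) x := by
    rw [hspace]
    exact lapl_lin N w μ _ _ _ _ _ _ x
  have hfsq : (fun z => Real.sqrt (u z t) ^ 2) = fun z => u z t :=
    funext fun z => Real.sq_sqrt (hu z t).le
  rw [hlapl, hD.deriv]
  simp only [gam2]
  simp only [hfsq]
  ring
end

section
/- Integral minimization lemma: For any continuous functions ψ and α:[T₁,T₂]→ℝ with α > 0, min_{s∈[T₁,T₂]} ( ψ(s) − (1/α(s)) ∫_s^{T₂} ψ(t)² dt ) ≤ (2 ∫_{T₁}^{T₂} ∫_{T₁}^s α(u) du ds) / (T₂−T₁)³. -/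
open Real MeasureTheory intervalIntegral Set

set_option maxHeartbeats 800000 in
lemma aux_min (T₁ T₂ : ℝ) (hT : T₁ < T₂) (ψ α : ℝ → ℝ)
    (hψ : Continuous ψ) (hα : Continuous α) (hαpos : ∀ s, 0 < α s) :
    ∃ s ∈ Set.Icc T₁ T₂,
      ψ s - (1 / α s) * ∫ t in s..T₂, (ψ t) ^ 2
        ≤ 2 * (∫ s in T₁..T₂, ∫ u in T₁..s, α u) / (T₂ - T₁) ^ 3 := by
  by_contra hcon
  push_neg at hcon
  set C : ℝ := 2 * (∫ s in T₁..T₂, ∫ u in T₁..s, α u) / (T₂ - T₁) ^ 3 with hC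
  have hαinv : Continuous fun t => (α t)⁻¹ := hα.inv₀ fun t => (hαpos t).ne'
  set B : ℝ → ℝ := fun s => ∫ t in T₁..s, (α t)⁻¹ with hBdef
  set F : ℝ → ℝ := fun s => ∫ t in s..T₂, (ψ t) ^ 2 with hFdef
  set A : ℝ → ℝ := fun s => ∫ u in T₁..s, α u with hAdef
  have hBderiv : ∀ s, HasDerivAt B (α s)⁻¹ s := fun s =>
    integral_hasDerivAt_right (hαinv.intervalIntegrable _ _)
      (hαinv.stronglyMeasurable.stronglyMeasurableAtFilter) hαinv.continuousAt
  have hAderiv : ∀ s, HasDerivAt A (α s) s := fun s =>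
    integral_hasDerivAt_right (hα.intervalIntegrable _ _)
      (hα.stronglyMeasurable.stronglyMeasurableAtFilter) hα.continuousAt
  have hψsq : Continuous fun t => (ψ t) ^ 2 := hψ.pow 2
  have hFderiv : ∀ s, HasDerivAt F (-(ψ s) ^ 2) s := fun s =>
    integral_hasDerivAt_left (hψsq.intervalIntegrable _ _)
      (hψsq.stronglyMeasurable.stronglyMeasurableAtFilter) hψsq.continuousAt
  have hBc : Continuous B := by
    rw [continuous_iff_continuousAt]; exact fun s => (hBderiv s).continuousAt
  have hFc : Continuous F := by
    rw [continuous_iff_continuousAt]; exact fun s => (hFderiv s).continuousAt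
  have hBnn : ∀ s, T₁ ≤ s → 0 ≤ B s := fun s hs =>
    intervalIntegral.integral_nonneg hs fun u _ => le_of_lt (inv_pos.2 (hαpos u))
  have hB0 : B T₁ = 0 := by simp [hBdef]
  have hA0 : A T₁ = 0 := by simp [hAdef]
  have hF0 : F T₂ = 0 := by simp [hFdef]
  set I₁ : ℝ := ∫ u in T₁..T₂, α u * (T₂ - u) with hI₁
  set I₂ : ℝ := ∫ u in T₁..T₂, (α u)⁻¹ * (T₂ - u) with hI₂
  -- f1 : ∫ A = I₁
  have f1 : (∫ s in T₁..T₂, A s) = I₁ := by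
    have hib := integral_mul_deriv_eq_deriv_mul (a := T₁) (b := T₂)
      (u := A) (v := fun s => s - T₂) (u' := α) (v' := fun _ => (1:ℝ))
      (fun x _ => hAderiv x) (fun x _ => (hasDerivAt_id x).sub_const T₂)
      (hα.intervalIntegrable _ _) (continuous_const.intervalIntegrable _ _)
    rw [hA0] at hib
    simp only [mul_one, sub_self, mul_zero, zero_mul, zero_sub, sub_zero] at hib
    have e2 : I₁ = - ∫ x in T₁..T₂, α x * (x - T₂) := by
      rw [hI₁, ← intervalIntegral.integral_neg]
      exact intervalIntegral.integral_congr fun x _ => by ring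
    rw [hib, e2]
  -- f2 : ∫ B = I₂
  have f2 : (∫ s in T₁..T₂, B s) = I₂ := by
    have hib := integral_mul_deriv_eq_deriv_mul (a := T₁) (b := T₂)
      (u := B) (v := fun s => s - T₂) (u' := fun t => (α t)⁻¹) (v' := fun _ => (1:ℝ))
      (fun x _ => hBderiv x) (fun x _ => (hasDerivAt_id x).sub_const T₂)
      (hαinv.intervalIntegrable _ _) (continuous_const.intervalIntegrable _ _)
    rw [hB0] at hib
    simp only [mul_one, sub_self, mul_zero, zero_mul, zero_sub, sub_zero] at hib
    have e2 : I₂ = - ∫ x in T₁..T₂, (α x)⁻¹ * (x - T₂) := by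
      rw [hI₂, ← intervalIntegral.integral_neg]
      exact intervalIntegral.integral_congr fun x _ => by ring
    rw [hib, e2]
  -- f3 : ∫ (2 B α⁻¹) F = ∫ B² ψ²
  have f3 : (∫ s in T₁..T₂, (2 * B s * (α s)⁻¹) * F s)
      = ∫ t in T₁..T₂, B t ^ 2 * ψ t ^ 2 := by
    have hBsq : ∀ x, HasDerivAt (fun s => B s ^ 2) (2 * B x * (α x)⁻¹) x := by
      intro x
      have h := (hBderiv x).pow 2
      norm_num at h
      exact h
    have hib := integral_mul_deriv_eq_deriv_mul (a := T₁) (b := T₂)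
      (u := fun s => B s ^ 2) (v := F) (u' := fun s => 2 * B s * (α s)⁻¹)
      (v' := fun s => -(ψ s) ^ 2)
      (fun x _ => hBsq x) (fun x _ => hFderiv x)
      (((continuous_const.mul hBc).mul hαinv).intervalIntegrable _ _)
      ((hψsq.neg).intervalIntegrable _ _)
    simp only [hF0, hB0, mul_zero, zero_sub, sub_zero, ne_eq, OfNat.ofNat_ne_zero,
      not_false_eq_true, zero_pow, zero_mul] at hib
    have h2 : (∫ s in T₁..T₂, B s ^ 2 * (-(ψ s) ^ 2))
        = - ∫ s in T₁..T₂, B s ^ 2 * ψ s ^ 2 := by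
      rw [← intervalIntegral.integral_neg]
      exact intervalIntegral.integral_congr fun x _ => by ring
    rw [h2] at hib
    linarith [hib]
  -- strict integral inequality
  have key : (∫ s in T₁..T₂, (C * (2 * B s) + (2 * B s * (α s)⁻¹) * F s))
      < ∫ s in T₁..T₂, (B s ^ 2 * ψ s ^ 2 + 1) := by
    apply intervalIntegral.integral_lt_integral_of_continuousOn_of_le_of_exists_lt hT
    · exact ((continuous_const.mul (continuous_const.mul hBc)).add
        (((continuous_const.mul hBc).mul hαinv).mul hFc)).continuousOn
    · exact (((hBc.pow 2).mul hψsq).add continuous_const).continuousOn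
    · intro x hx
      have hxm : x ∈ Set.Icc T₁ T₂ := ⟨hx.1.le, hx.2⟩
      have hh := hcon x hxm
      rw [one_div] at hh
      have hBx : 0 ≤ B x := hBnn x hxm.1
      have hmul : C * (2 * B x) ≤ (ψ x - (α x)⁻¹ * F x) * (2 * B x) :=
        mul_le_mul_of_nonneg_right hh.le (by linarith)
      nlinarith [sq_nonneg (B x * ψ x - 1)]
    · refine ⟨T₁, ⟨le_refl _, hT.le⟩, ?_⟩
      rw [hB0]; norm_num
  -- split integrals
  have hsplit1 : (∫ s in T₁..T₂, (C * (2 * B s) + (2 * B s * (α s)⁻¹) * F s))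
      = 2 * C * I₂ + ∫ t in T₁..T₂, B t ^ 2 * ψ t ^ 2 := by
    rw [intervalIntegral.integral_add (f := fun s => C * (2 * B s))
      (g := fun s => (2 * B s * (α s)⁻¹) * F s)
      ((continuous_const.mul (continuous_const.mul hBc)).intervalIntegrable _ _)
      ((((continuous_const.mul hBc).mul hαinv).mul hFc).intervalIntegrable _ _), f3]
    congr 1
    have e : (∫ s in T₁..T₂, C * (2 * B s)) = (2 * C) * ∫ s in T₁..T₂, B s := by
      rw [← intervalIntegral.integral_const_mul]
      exact intervalIntegral.integral_congr fun x _ => by ring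
    rw [e, f2]
  have hsplit2 : (∫ s in T₁..T₂, (B s ^ 2 * ψ s ^ 2 + 1))
      = (∫ t in T₁..T₂, B t ^ 2 * ψ t ^ 2) + (T₂ - T₁) := by
    rw [intervalIntegral.integral_add (f := fun s => B s ^ 2 * ψ s ^ 2) (g := fun _ => (1:ℝ))
      (((hBc.pow 2).mul hψsq).intervalIntegrable _ _)
      (continuous_const.intervalIntegrable _ _)]
    simp
  rw [hsplit1, hsplit2] at key
  have key2 : 2 * C * I₂ < T₂ - T₁ := by linarith
  -- positivity of I₁, I₂
  have hI₁pos : 0 < I₁ :=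
    intervalIntegral.intervalIntegral_pos_of_pos_on
      ((hα.mul (continuous_const.sub continuous_id)).intervalIntegrable _ _)
      (fun x hx => mul_pos (hαpos x) (by linarith [hx.2])) hT
  have hI₂pos : 0 < I₂ :=
    intervalIntegral.intervalIntegral_pos_of_pos_on
      ((hαinv.mul (continuous_const.sub continuous_id)).intervalIntegrable _ _)
      (fun x hx => mul_pos (inv_pos.2 (hαpos x)) (by linarith [hx.2])) hT
  -- Cauchy-Schwarz : (T₂-T₁)^4 ≤ 4 I₁ I₂
  have hCS : (T₂ - T₁) ^ 4 ≤ 4 * I₁ * I₂ := by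
    have s1 : 0 < Real.sqrt I₁ := Real.sqrt_pos.2 hI₁pos
    have s2 : 0 < Real.sqrt I₂ := Real.sqrt_pos.2 hI₂pos
    set lam : ℝ := Real.sqrt I₂ / Real.sqrt I₁ with hlam
    have hlampos : 0 < lam := div_pos s2 s1
    have hpt : ∀ u ∈ Set.Icc T₁ T₂,
        2 * (T₂ - u) ≤ lam * (α u * (T₂ - u)) + lam⁻¹ * ((α u)⁻¹ * (T₂ - u)) := by
      intro u hu
      have hαu := hαpos u
      have hla : 0 < lam * α u := mul_pos hlampos hαu
      have h3 : (lam * α u) * (lam * α u)⁻¹ = 1 := mul_inv_cancel₀ hla.ne'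
      have h1 : 2 ≤ lam * α u + lam⁻¹ * (α u)⁻¹ := by
        have h2 : lam⁻¹ * (α u)⁻¹ = (lam * α u)⁻¹ := by rw [mul_inv]
        rw [h2]
        nlinarith [sq_nonneg (lam * α u - 1), inv_pos.2 hla]
      have hTu : 0 ≤ T₂ - u := by linarith [hu.2]
      nlinarith [mul_le_mul_of_nonneg_right h1 hTu]
    have hint : (∫ u in T₁..T₂, 2 * (T₂ - u))
        ≤ ∫ u in T₁..T₂, (lam * (α u * (T₂ - u)) + lam⁻¹ * ((α u)⁻¹ * (T₂ - u))) :=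
      intervalIntegral.integral_mono_on hT.le
        ((continuous_const.mul (continuous_const.sub continuous_id)).intervalIntegrable _ _)
        (((continuous_const.mul (hα.mul (continuous_const.sub continuous_id))).add
          (continuous_const.mul (hαinv.mul (continuous_const.sub continuous_id)))).intervalIntegrable _ _)
        hpt
    have hlhs : (∫ u in T₁..T₂, 2 * (T₂ - u)) = (T₂ - T₁) ^ 2 := by
      rw [intervalIntegral.integral_const_mul,
        intervalIntegral.integral_sub (f := fun _ => T₂) (g := fun u => u)
          (continuous_const.intervalIntegrable _ _)
          ((continuous_id.intervalIntegrable _ _ : IntervalIntegrable (fun u : ℝ => u) volume T₁ T₂)),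
        intervalIntegral.integral_const, integral_id]
      simp only [smul_eq_mul]
      ring
    have c1 : Continuous fun u : ℝ => lam * (α u * (T₂ - u)) :=
      continuous_const.mul (hα.mul (continuous_const.sub continuous_id))
    have c2 : Continuous fun u : ℝ => lam⁻¹ * ((α u)⁻¹ * (T₂ - u)) :=
      continuous_const.mul (hαinv.mul (continuous_const.sub continuous_id))
    have hrhs : (∫ u in T₁..T₂, (lam * (α u * (T₂ - u)) + lam⁻¹ * ((α u)⁻¹ * (T₂ - u))))
        = lam * I₁ + lam⁻¹ * I₂ := by
      rw [intervalIntegral.integral_add (c1.intervalIntegrable _ _) (c2.intervalIntegrable _ _),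
        intervalIntegral.integral_const_mul, intervalIntegral.integral_const_mul]
    rw [hlhs, hrhs] at hint
    have hi1 : Real.sqrt I₁ * Real.sqrt I₁ = I₁ := Real.mul_self_sqrt hI₁pos.le
    have hi2 : Real.sqrt I₂ * Real.sqrt I₂ = I₂ := Real.mul_self_sqrt hI₂pos.le
    have hval : lam * I₁ + lam⁻¹ * I₂ = 2 * (Real.sqrt I₁ * Real.sqrt I₂) := by
      rw [hlam]
      field_simp
      linear_combination (-(Real.sqrt I₂ ^ 2)) * hi1 + (-(Real.sqrt I₁ ^ 2)) * hi2
    rw [hval] at hint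
    calc (T₂ - T₁) ^ 4 = (T₂ - T₁) ^ 2 * ((T₂ - T₁) ^ 2) := by ring
      _ ≤ (2 * (Real.sqrt I₁ * Real.sqrt I₂)) * (2 * (Real.sqrt I₁ * Real.sqrt I₂)) :=
          mul_self_le_mul_self (sq_nonneg _) hint
      _ = 4 * I₁ * I₂ := by
          linear_combination (4 * Real.sqrt I₂ * Real.sqrt I₂) * hi1 + (4 * I₁) * hi2
  -- conclude
  have hCval : C = 2 * I₁ / (T₂ - T₁) ^ 3 := by rw [hC, f1]
  have hTpos : 0 < (T₂ - T₁) ^ 3 := by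
    have h0 : 0 < T₂ - T₁ := by linarith
    positivity
  rw [hCval] at key2
  have e : 2 * (2 * I₁ / (T₂ - T₁) ^ 3) * I₂ = 4 * I₁ * I₂ / (T₂ - T₁) ^ 3 := by ring
  rw [e] at key2
  have h4 : 4 * I₁ * I₂ < (T₂ - T₁) * (T₂ - T₁) ^ 3 := (div_lt_iff₀ hTpos).1 key2
  nlinarith [hCS, h4]

theorem integral_minimization (T₁ T₂ : ℝ) (hT : T₁ < T₂) (ψ α : ℝ → ℝ)
    (hψ : ContinuousOn ψ (Set.Icc T₁ T₂))
    (hα : ContinuousOn α (Set.Icc T₁ T₂))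
    (hαpos : ∀ s ∈ Set.Icc T₁ T₂, 0 < α s) :
    ∃ s ∈ Set.Icc T₁ T₂,
      ψ s - (1 / α s) * ∫ t in s..T₂, (ψ t) ^ 2
        ≤ 2 * (∫ s in T₁..T₂, ∫ u in T₁..s, α u) / (T₂ - T₁) ^ 3 := by
  set ψ' : ℝ → ℝ := Set.IccExtend hT.le ((Set.Icc T₁ T₂).restrict ψ) with hψ'
  set α' : ℝ → ℝ := Set.IccExtend hT.le ((Set.Icc T₁ T₂).restrict α) with hα'
  have hψ'c : Continuous ψ' := Continuous.Icc_extend' hψ.restrict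
  have hα'c : Continuous α' := Continuous.Icc_extend' hα.restrict
  have hψE : ∀ x ∈ Set.Icc T₁ T₂, ψ' x = ψ x := fun x hx =>
    Set.IccExtend_of_mem hT.le _ hx
  have hαE : ∀ x ∈ Set.Icc T₁ T₂, α' x = α x := fun x hx =>
    Set.IccExtend_of_mem hT.le _ hx
  have hα'pos : ∀ x, 0 < α' x := fun x => hαpos _ (Set.projIcc T₁ T₂ hT.le x).2
  obtain ⟨s, hs, hineq⟩ := aux_min T₁ T₂ hT ψ' α' hψ'c hα'c hα'pos
  refine ⟨s, hs, ?_⟩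
  have e1 : ψ' s = ψ s := hψE s hs
  have e2 : α' s = α s := hαE s hs
  have e3 : (∫ t in s..T₂, (ψ' t) ^ 2) = ∫ t in s..T₂, (ψ t) ^ 2 := by
    apply intervalIntegral.integral_congr
    intro x hx
    have hxm : x ∈ Set.Icc T₁ T₂ :=
      Set.uIcc_subset_Icc hs (Set.right_mem_Icc.2 hT.le) hx
    simp only []
    rw [hψE x hxm]
  have e4 : (∫ s' in T₁..T₂, ∫ u in T₁..s', α' u) = ∫ s' in T₁..T₂, ∫ u in T₁..s', α u := by
    apply intervalIntegral.integral_congr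
    intro x hx
    have hxm : x ∈ Set.Icc T₁ T₂ := by
      rwa [Set.uIcc_of_le hT.le] at hx
    apply intervalIntegral.integral_congr
    intro y hy
    have hym : y ∈ Set.Icc T₁ T₂ :=
      Set.uIcc_subset_Icc (Set.left_mem_Icc.2 hT.le) hxm hy
    exact hαE y hym
  rw [e1, e2, e3, e4] at hineq
  exact hineq
end

section
/- One-step Harnack estimate: Let G be a weighted graph with measure bound μ_max and edge weight lower bound ω_min, and suppose f:V×ℝ→(0,∞) satisfies Γ(f)/f² − α(t)·∂_t f / f ≤ ψ(t) at two adjacent vertices x ∼ y for t ∈ [T₁,T₂], with α(t) ≥ 1. Then log f(x,T₁) − log f(y,T₂) ≤ ∫_{T₁}^{T₂} ψ(t)/α(t) dt + (4μ_max/(ω_min(T₂−T₁)³)) ∫_{T₁}^{T₂} ∫_{T₁}^s α(u) du ds. -/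
open Real Finset MeasureTheory

variable {V : Type*}

private lemma amgm_aux {p X Y : ℝ} (hX : 0 ≤ X) (hY : 0 ≤ Y)
    (h : p ^ 2 ≤ 4 * (X * Y)) : p ≤ X + Y := by
  nlinarith [sq_nonneg (X - Y), sq_nonneg (X + Y - p)]

set_option maxHeartbeats 1000000 in
private lemma core_aux {c A L τ h : ℝ} (hc : 0 < c) (hA : 0 < A) (hL : 0 < L)
    (hτ0 : 0 ≤ τ) (hτ1 : τ ≤ 1) :
    4 * (1 - τ ^ 2) * τ / L * h
      - c / A * ((1 - (1 - τ ^ 2) ^ 2) * (Real.exp (-h) - 1) ^ 2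
          + (1 - τ ^ 2) ^ 2 * (Real.exp h - 1) ^ 2)
      ≤ 2 / (c * L ^ 3) * (L * τ) * A := by
  obtain ⟨u, hu⟩ : ∃ u : ℝ, u = 1 - τ ^ 2 := ⟨_, rfl⟩
  rw [← hu]
  have hu0 : 0 ≤ u := by nlinarith
  have hu1 : u ≤ 1 := by nlinarith
  have hRHS : 0 ≤ 2 / (c * L ^ 3) * (L * τ) * A := by positivity
  rcases le_or_gt h 0 with hh | hh
  · have h1 : 4 * u * τ / L * h ≤ 0 :=
      mul_nonpos_of_nonneg_of_nonpos (by positivity) hh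
    have h2 : 0 ≤ c / A * ((1 - u ^ 2) * (Real.exp (-h) - 1) ^ 2
        + u ^ 2 * (Real.exp h - 1) ^ 2) := by
      have : (0:ℝ) ≤ 1 - u ^ 2 := by nlinarith
      positivity
    nlinarith
  · obtain ⟨s, hs⟩ : ∃ s : ℝ, s = Real.exp (h / 2) := ⟨_, rfl⟩
    have hs0 : 0 < s := hs ▸ Real.exp_pos _
    have hes : Real.exp h = s ^ 2 := by
      rw [hs, pow_two, ← Real.exp_add]; congr 1; ring
    have hesinv : Real.exp (-h) * s ^ 2 = 1 := by
      rw [← hes, ← Real.exp_add]; simp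
    have hesneg : Real.exp (-h) = 1 / s ^ 2 := by
      field_simp at hesinv ⊢; linarith [hesinv]
    have hsinh : h / 2 ≤ Real.sinh (h / 2) := (Real.self_le_sinh_iff).2 (by linarith)
    have hsinv : Real.exp (-(h/2)) * s = 1 := by
      rw [hs, ← Real.exp_add]; simp
    rw [Real.sinh_eq, ← hs] at hsinh
    have key1 : h * s ≤ s ^ 2 - 1 := by nlinarith [hsinh, hsinv, hs0]
    have hs21 : 0 ≤ s ^ 2 - 1 := le_trans (le_of_lt (mul_pos hh hs0)) key1
    have key1sq : h ^ 2 * s ^ 2 ≤ (s ^ 2 - 1) ^ 2 := by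
      nlinarith [mul_le_mul_of_nonneg_left key1 (le_of_lt (mul_pos hh hs0)),
        mul_le_mul_of_nonneg_right key1 hs21]
    obtain ⟨v, hv⟩ : ∃ v : ℝ, v = Real.sqrt (1 + u) := ⟨_, rfl⟩
    have hv2 : v ^ 2 = 1 + u := hv ▸ Real.sq_sqrt (by linarith)
    have hv0 : 0 ≤ v := hv ▸ Real.sqrt_nonneg _
    have huv : u ≤ v := hv ▸ (Real.le_sqrt hu0 (by linarith)).2 (by nlinarith)
    -- lower bound the gain
    have hgain : h ^ 2 * (2 * u * τ * v)
        ≤ (1 - u ^ 2) * (Real.exp (-h) - 1) ^ 2 + u ^ 2 * (Real.exp h - 1) ^ 2 := by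
      have h1u : (1:ℝ) - u ^ 2 = τ ^ 2 * (1 + u) := by nlinarith
      have hexpand : (1 - u ^ 2) * (Real.exp (-h) - 1) ^ 2 + u ^ 2 * (Real.exp h - 1) ^ 2
          = (s ^ 2 - 1) ^ 2 * (τ ^ 2 * (1 + u) / s ^ 4 + u ^ 2) := by
        rw [hesneg, hes, h1u]; field_simp; ring
      rw [hexpand]
      have hs' : s ≠ 0 := ne_of_gt hs0
      have hamgm : 2 * u * τ * v ≤ s ^ 2 * (τ ^ 2 * (1 + u) / s ^ 4 + u ^ 2) := by
        have e1 : s ^ 2 * (τ ^ 2 * (1 + u) / s ^ 4 + u ^ 2)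
            = (τ ^ 2 * v ^ 2 + u ^ 2 * s ^ 4) / s ^ 2 := by
          rw [← hv2]; field_simp
        rw [e1, le_div_iff₀ (by positivity)]
        nlinarith [sq_nonneg (τ * v - u * s ^ 2)]
      have hpos : 0 ≤ τ ^ 2 * (1 + u) / s ^ 4 + u ^ 2 := by positivity
      calc h ^ 2 * (2 * u * τ * v)
          ≤ h ^ 2 * (s ^ 2 * (τ ^ 2 * (1 + u) / s ^ 4 + u ^ 2)) :=
            mul_le_mul_of_nonneg_left hamgm (sq_nonneg h)
        _ = h ^ 2 * s ^ 2 * (τ ^ 2 * (1 + u) / s ^ 4 + u ^ 2) := by ring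
        _ ≤ (s ^ 2 - 1) ^ 2 * (τ ^ 2 * (1 + u) / s ^ 4 + u ^ 2) :=
            mul_le_mul_of_nonneg_right key1sq hpos
    -- AM-GM assembly
    have hfinal : 4 * u * τ / L * h
        ≤ c / A * (h ^ 2 * (2 * u * τ * v)) + 2 / (c * L ^ 3) * (L * τ) * A := by
      apply amgm_aux (by positivity) hRHS
      have h4XY : 4 * (c / A * (h ^ 2 * (2 * u * τ * v)) * (2 / (c * L ^ 3) * (L * τ) * A))
          = 16 * τ ^ 2 * h ^ 2 * (u * v) / L ^ 2 := by
        field_simp; ring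
      have hp2 : (4 * u * τ / L * h) ^ 2 = 16 * τ ^ 2 * h ^ 2 * (u * u) / L ^ 2 := by
        field_simp; ring
      rw [h4XY, hp2]
      gcongr
    have hmul := mul_le_mul_of_nonneg_left hgain (le_of_lt (div_pos hc hA))
    linarith

private lemma mono_aux {F g : ℝ → ℝ} {T₁ T₂ a b : ℝ}
    (hF : ∀ t, 0 < F t) (hFd : ∀ t, DifferentiableAt ℝ F t)
    (hg : Continuous g) (hle : ∀ t ∈ Set.Icc T₁ T₂, g t ≤ deriv F t / F t)
    (ha : a ∈ Set.Icc T₁ T₂) (hb : b ∈ Set.Icc T₁ T₂) (hab : a ≤ b) :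
    ∫ t in a..b, g t ≤ Real.log (F b) - Real.log (F a) := by
  have hG : ∀ u : ℝ, HasDerivAt (fun v => ∫ t in a..v, g t) (g u) u := fun u =>
    intervalIntegral.integral_hasDerivAt_right (hg.intervalIntegrable a u)
      (hg.stronglyMeasurableAtFilter _ _) hg.continuousAt
  have hφd : ∀ u : ℝ, HasDerivAt (fun v => Real.log (F v) - ∫ t in a..v, g t)
      (deriv F u / F u - g u) u := fun u =>
    (((hFd u).hasDerivAt).log (ne_of_gt (hF u))).sub (hG u)
  have hmono : MonotoneOn (fun v => Real.log (F v) - ∫ t in a..v, g t) (Set.Icc T₁ T₂) := by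
    apply monotoneOn_of_deriv_nonneg (convex_Icc _ _)
    · exact fun uu _ => ((hφd uu).continuousAt).continuousWithinAt
    · exact fun uu _ => ((hφd uu).differentiableAt).differentiableWithinAt
    · intro uu huu
      rw [(hφd uu).deriv]
      have h1 := hle uu (interior_subset huu)
      linarith
  have h2 := hmono ha hb hab
  simp only [intervalIntegral.integral_same] at h2
  linarith [h2]


theorem one_step_harnack (N : V → Finset V) (w : V → V → ℝ) (μ : V → ℝ)
    (hμ : ∀ x, 0 < μ x) (hw : ∀ x y, y ∈ N x → 0 < w x y)
    (μmax ωmin : ℝ) (hμmax : ∀ x, μ x ≤ μmax)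
    (hωmin : 0 < ωmin) (hωe : ∀ x y, y ∈ N x → ωmin ≤ w x y)
    (T₁ T₂ : ℝ) (hT : T₁ < T₂)
    (α ψ : ℝ → ℝ)
    (hαcont : ContinuousOn α (Set.Icc T₁ T₂))
    (hψcont : ContinuousOn ψ (Set.Icc T₁ T₂))
    (hα1 : ∀ t ∈ Set.Icc T₁ T₂, 1 ≤ α t)
    (f : V → ℝ → ℝ) (hf : ∀ z t, 0 < f z t)
    (hfd : ∀ z t, DifferentiableAt ℝ (fun s => f z s) t)
    (x y : V) (hxy : y ∈ N x) (hyx : x ∈ N y)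
    (hgrad : ∀ t ∈ Set.Icc T₁ T₂, ∀ z ∈ ({x, y} : Set V),
      gam N w μ (fun v => f v t) (fun v => f v t) z / (f z t) ^ 2
          - α t * (deriv (fun s => f z s) t) / f z t ≤ ψ t) :
    Real.log (f x T₁) - Real.log (f y T₂)
      ≤ (∫ t in T₁..T₂, ψ t / α t)
        + (4 * μmax / (ωmin * (T₂ - T₁) ^ 3))
            * ∫ s in T₁..T₂, ∫ u in T₁..s, α u := by
  have hT' : T₁ ≤ T₂ := hT.le
  set L : ℝ := T₂ - T₁ with hLdef
  have hL : 0 < L := by rw [hLdef]; linarith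
  have hμm : 0 < μmax := lt_of_lt_of_le (hμ x) (hμmax x)
  set c : ℝ := ωmin / (2 * μmax) with hcdef
  have hc : 0 < c := by rw [hcdef]; positivity
  -- clamping
  set pr : ℝ → ℝ := fun t => max T₁ (min t T₂) with hprdef
  have hprcont : Continuous pr := continuous_const.max (continuous_id.min continuous_const)
  have hprmem : ∀ t, pr t ∈ Set.Icc T₁ T₂ :=
    fun t => ⟨le_max_left _ _, max_le hT' (min_le_right _ _)⟩
  have hprid : ∀ t ∈ Set.Icc T₁ T₂, pr t = t := by
    intro t ht
    rw [hprdef]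
    simp only
    rw [min_eq_left ht.2, max_eq_right ht.1]
  set A : ℝ → ℝ := fun t => α (pr t) with hAdef
  set Ψ : ℝ → ℝ := fun t => ψ (pr t) with hΨdef
  have hAcont : Continuous A := hαcont.comp_continuous hprcont hprmem
  have hΨcont : Continuous Ψ := hψcont.comp_continuous hprcont hprmem
  have hA1 : ∀ t, 1 ≤ A t := fun t => hα1 _ (hprmem t)
  have hA0 : ∀ t, 0 < A t := fun t => zero_lt_one.trans_le (hA1 t)
  have hAeq : ∀ t ∈ Set.Icc T₁ T₂, A t = α t := by
    intro t ht; rw [hAdef]; simp only; rw [hprid t ht]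
  have hΨeq : ∀ t ∈ Set.Icc T₁ T₂, Ψ t = ψ t := by
    intro t ht; rw [hΨdef]; simp only; rw [hprid t ht]
  -- continuity of f
  have hfc : ∀ z : V, Continuous (fun t => f z t) :=
    fun z => continuous_iff_continuousAt.2 fun t => (hfd z t).continuousAt
  set q1 : ℝ → ℝ := fun t => (f y t / f x t - 1) ^ 2 with hq1def
  set q2 : ℝ → ℝ := fun t => (f x t / f y t - 1) ^ 2 with hq2def
  have hq1cont : Continuous q1 :=
    (((hfc y).div (hfc x) fun t => (hf x t).ne').sub continuous_const).pow 2
  have hq2cont : Continuous q2 :=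
    (((hfc x).div (hfc y) fun t => (hf y t).ne').sub continuous_const).pow 2
  -- Gamma lower bounds
  have hgab : ∀ (a b : V) (t : ℝ), b ∈ N a →
      c * ((f b t / f a t - 1) ^ 2)
        ≤ gam N w μ (fun v => f v t) (fun v => f v t) a / (f a t) ^ 2 := by
    intro a b t hab
    have hfa := hf a t
    have hfb := hf b t
    have hterm : ∀ z ∈ N a, 0 ≤ w a z * (f z t - f a t) * (f z t - f a t) := by
      intro z hz
      rw [mul_assoc]
      exact mul_nonneg (hw a z hz).le (mul_self_nonneg _)
    have hsum : w a b * (f b t - f a t) * (f b t - f a t)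
        ≤ ∑ z ∈ N a, w a z * (f z t - f a t) * (f z t - f a t) :=
      Finset.single_le_sum hterm hab
    have hwb : ωmin * (f b t - f a t) ^ 2 ≤ w a b * (f b t - f a t) * (f b t - f a t) := by
      nlinarith [hωe a b hab, sq_nonneg (f b t - f a t)]
    have hμa := hμ a
    have hμb := hμmax a
    have hgam : c * (f b t - f a t) ^ 2 ≤ gam N w μ (fun v => f v t) (fun v => f v t) a := by
      rw [gam]
      have h2 : (0:ℝ) < 2 * μ a := by linarith
      have h3 : 1 / (2 * μmax) ≤ 1 / (2 * μ a) :=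
        one_div_le_one_div_of_le h2 (by linarith)
      have h4 : ωmin * (f b t - f a t) ^ 2
          ≤ ∑ z ∈ N a, w a z * (f z t - f a t) * (f z t - f a t) := le_trans hwb hsum
      calc c * (f b t - f a t) ^ 2 = 1 / (2 * μmax) * (ωmin * (f b t - f a t) ^ 2) := by
            rw [hcdef]; field_simp
        _ ≤ 1 / (2 * μ a) * (ωmin * (f b t - f a t) ^ 2) := by
            apply mul_le_mul_of_nonneg_right h3 (by positivity)
        _ ≤ 1 / (2 * μ a) * ∑ z ∈ N a, w a z * (f z t - f a t) * (f z t - f a t) := by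
            apply mul_le_mul_of_nonneg_left h4 (by positivity)
    have h5 : (f b t / f a t - 1) ^ 2 = (f b t - f a t) ^ 2 / (f a t) ^ 2 := by
      field_simp
    rw [h5, ← mul_div_assoc]
    gcongr

  -- derivative inequalities
  have hgcont1 : Continuous (fun t => (c * q1 t - Ψ t) / A t) :=
    ((continuous_const.mul hq1cont).sub hΨcont).div hAcont fun t => (hA0 t).ne'
  have hgcont2 : Continuous (fun t => (c * q2 t - Ψ t) / A t) :=
    ((continuous_const.mul hq2cont).sub hΨcont).div hAcont fun t => (hA0 t).ne'
  have hineqx : ∀ t ∈ Set.Icc T₁ T₂,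
      (c * q1 t - Ψ t) / A t ≤ deriv (fun s => f x s) t / f x t := by
    intro t ht
    have h1 := hgrad t ht x (by simp)
    have h2 : c * q1 t ≤ gam N w μ (fun v => f v t) (fun v => f v t) x / f x t ^ 2 := by
      simp only [hq1def]; exact hgab x y t hxy
    have hαt : 0 < α t := zero_lt_one.trans_le (hα1 t ht)
    rw [hAeq t ht, hΨeq t ht, div_le_iff₀ hαt]
    rw [mul_div_assoc] at h1
    nlinarith [h1, h2]
  have hineqy : ∀ t ∈ Set.Icc T₁ T₂,
      (c * q2 t - Ψ t) / A t ≤ deriv (fun s => f y s) t / f y t := by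
    intro t ht
    have h1 := hgrad t ht y (by simp)
    have h2 : c * q2 t ≤ gam N w μ (fun v => f v t) (fun v => f v t) y / f y t ^ 2 := by
      simp only [hq2def]; exact hgab y x t hyx
    have hαt : 0 < α t := zero_lt_one.trans_le (hα1 t ht)
    rw [hAeq t ht, hΨeq t ht, div_le_iff₀ hαt]
    rw [mul_div_assoc] at h1
    nlinarith [h1, h2]
  have hdx : ∀ s ∈ Set.Icc T₁ T₂,
      ∫ t in T₁..s, (c * q1 t - Ψ t) / A t ≤ Real.log (f x s) - Real.log (f x T₁) :=
    fun s hs => mono_aux (hf x) (hfd x) hgcont1 hineqx (Set.left_mem_Icc.2 hT') hs hs.1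
  have hdy : ∀ s ∈ Set.Icc T₁ T₂,
      ∫ t in s..T₂, (c * q2 t - Ψ t) / A t ≤ Real.log (f y T₂) - Real.log (f y s) :=
    fun s hs => mono_aux (hf y) (hfd y) hgcont2 hineqy hs (Set.right_mem_Icc.2 hT') hs.2
  -- the function m
  set k1 : ℝ → ℝ := fun t => q1 t / A t with hk1def
  set k2 : ℝ → ℝ := fun t => q2 t / A t with hk2def
  have hk1cont : Continuous k1 := hq1cont.div hAcont fun t => (hA0 t).ne'
  have hk2cont : Continuous k2 := hq2cont.div hAcont fun t => (hA0 t).ne'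
  set K1 : ℝ → ℝ := fun s => ∫ t in T₁..s, k1 t with hK1def
  set K2 : ℝ → ℝ := fun s => ∫ t in T₁..s, k2 t with hK2def
  have hK1d : ∀ s, HasDerivAt K1 (k1 s) s := fun s =>
    intervalIntegral.integral_hasDerivAt_right (hk1cont.intervalIntegrable _ _)
      (hk1cont.stronglyMeasurableAtFilter _ _) hk1cont.continuousAt
  have hK2d : ∀ s, HasDerivAt K2 (k2 s) s := fun s =>
    intervalIntegral.integral_hasDerivAt_right (hk2cont.intervalIntegrable _ _)
      (hk2cont.stronglyMeasurableAtFilter _ _) hk2cont.continuousAt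
  have hK1cont : Continuous K1 := continuous_iff_continuousAt.2 fun s => (hK1d s).continuousAt
  have hK2cont : Continuous K2 := continuous_iff_continuousAt.2 fun s => (hK2d s).continuousAt
  set m : ℝ → ℝ := fun s =>
    (Real.log (f x s) - Real.log (f y s)) - c * K1 s - c * (K2 T₂ - K2 s) with hmdef
  have hlogxc : Continuous (fun s : ℝ => Real.log (f x s)) :=
    (hfc x).log fun t => (hf x t).ne'
  have hlogyc : Continuous (fun s : ℝ => Real.log (f y s)) :=
    (hfc y).log fun t => (hf y t).ne'
  have hmcont : Continuous m := by
    rw [hmdef]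
    exact (((hlogxc.sub hlogyc).sub (continuous_const.mul hK1cont)).sub
      (continuous_const.mul (continuous_const.sub hK2cont)))
  have hΨAcont : Continuous (fun t => Ψ t / A t) := hΨcont.div hAcont fun t => (hA0 t).ne'
  have hstepC : ∀ s ∈ Set.Icc T₁ T₂,
      Real.log (f x T₁) - Real.log (f y T₂) ≤ (∫ t in T₁..T₂, Ψ t / A t) + m s := by
    intro s hs
    have h1 := hdx s hs
    have h2 := hdy s hs
    have e1 : ∫ t in T₁..s, (c * q1 t - Ψ t) / A t
        = c * K1 s - ∫ t in T₁..s, Ψ t / A t := by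
      have hfn : (fun t => (c * q1 t - Ψ t) / A t) = fun t => c * k1 t - Ψ t / A t := by
        funext t
        rw [hk1def]
        simp only
        rw [sub_div, mul_div_assoc]
      rw [hfn, intervalIntegral.integral_sub ((hk1cont.intervalIntegrable _ _).const_mul c)
        (hΨAcont.intervalIntegrable _ _), intervalIntegral.integral_const_mul]
    have e2 : ∫ t in s..T₂, (c * q2 t - Ψ t) / A t
        = c * (K2 T₂ - K2 s) - ∫ t in s..T₂, Ψ t / A t := by
      have hfn : (fun t => (c * q2 t - Ψ t) / A t) = fun t => c * k2 t - Ψ t / A t := by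
        funext t
        rw [hk2def]
        simp only
        rw [sub_div, mul_div_assoc]
      have hsplit : K2 s + ∫ t in s..T₂, k2 t = K2 T₂ := by
        rw [hK2def]
        simp only
        exact intervalIntegral.integral_add_adjacent_intervals
          (hk2cont.intervalIntegrable _ _) (hk2cont.intervalIntegrable _ _)
      rw [hfn, intervalIntegral.integral_sub ((hk2cont.intervalIntegrable _ _).const_mul c)
        (hΨAcont.intervalIntegrable _ _), intervalIntegral.integral_const_mul]
      have : ∫ t in s..T₂, k2 t = K2 T₂ - K2 s := by linarith
      rw [this]
    have e3 : (∫ t in T₁..s, Ψ t / A t) + (∫ t in s..T₂, Ψ t / A t)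
        = ∫ t in T₁..T₂, Ψ t / A t :=
      intervalIntegral.integral_add_adjacent_intervals
        (hΨAcont.intervalIntegrable _ _) (hΨAcont.intervalIntegrable _ _)
    rw [e1] at h1
    rw [e2] at h2
    rw [hmdef]
    simp only
    linarith

  -- weight functions
  set τf : ℝ → ℝ := fun t => (T₂ - t) / L with hτdef
  set R : ℝ → ℝ := fun t => (1 - τf t ^ 2) ^ 2 with hRdef
  set ρ : ℝ → ℝ := fun t => 4 * (1 - τf t ^ 2) * τf t / L with hρdef
  have hτcont : Continuous τf := (continuous_const.sub continuous_id).div_const L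
  have hρcont : Continuous ρ := by
    rw [hρdef]
    exact ((continuous_const.mul (continuous_const.sub (hτcont.pow 2))).mul hτcont).div_const L
  have hRcont : Continuous R := by
    rw [hRdef]; exact (continuous_const.sub (hτcont.pow 2)).pow 2
  have hRd : ∀ t, HasDerivAt R (ρ t) t := by
    intro t
    have h1 : HasDerivAt (fun t : ℝ => (T₂ - t) / L) (-1 / L) t :=
      ((hasDerivAt_id t).const_sub T₂).div_const L
    have h2 := ((h1.pow 2).const_sub 1).pow 2
    simp only [hRdef, hρdef, hτdef]
    convert h2 using 1
    · rfl
    · rfl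
    · funext s; simp only [Pi.pow_apply]
    · simp only [Pi.pow_apply]; ring
  have hRT₂ : R T₂ = 1 := by rw [hRdef]; simp [hτdef]
  have hRT₁ : R T₁ = 0 := by
    rw [hRdef]
    simp only [hτdef, ← hLdef]
    rw [div_self hL.ne']
    norm_num
  have hρint : ∫ s in T₁..T₂, ρ s = 1 := by
    rw [intervalIntegral.integral_eq_sub_of_hasDerivAt (fun s _ => hRd s)
      (hρcont.intervalIntegrable _ _), hRT₂, hRT₁]
    ring
  have hτ01 : ∀ t ∈ Set.Icc T₁ T₂, 0 ≤ τf t ∧ τf t ≤ 1 := by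
    intro t ht
    rw [hτdef]
    constructor
    · apply div_nonneg _ hL.le
      linarith [ht.2]
    · rw [div_le_one hL]
      rw [hLdef]
      linarith [ht.1]
  have hρnn : ∀ t ∈ Set.Icc T₁ T₂, 0 ≤ ρ t := by
    intro t ht
    obtain ⟨h1, h2⟩ := hτ01 t ht
    rw [hρdef]
    simp only
    have h3 : 0 ≤ 1 - τf t ^ 2 := by nlinarith
    positivity
  -- integration by parts identities
  have hIBP1 : ∫ s in T₁..T₂, K1 s * ρ s
      = K1 T₂ * R T₂ - K1 T₁ * R T₁ - ∫ s in T₁..T₂, k1 s * R s :=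
    intervalIntegral.integral_mul_deriv_eq_deriv_mul (fun s _ => hK1d s) (fun s _ => hRd s)
      (hk1cont.intervalIntegrable _ _) (hρcont.intervalIntegrable _ _)
  have hIBP2 : ∫ s in T₁..T₂, K2 s * ρ s
      = K2 T₂ * R T₂ - K2 T₁ * R T₁ - ∫ s in T₁..T₂, k2 s * R s :=
    intervalIntegral.integral_mul_deriv_eq_deriv_mul (fun s _ => hK2d s) (fun s _ => hRd s)
      (hk2cont.intervalIntegrable _ _) (hρcont.intervalIntegrable _ _)
  have hK1T₁ : K1 T₁ = 0 := intervalIntegral.integral_same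
  have hK2T₁ : K2 T₁ = 0 := intervalIntegral.integral_same
  have hK1T₂ : K1 T₂ = ∫ t in T₁..T₂, k1 t := rfl
  -- the integrand Φ
  set Φ : ℝ → ℝ := fun t => ρ t * (Real.log (f x t) - Real.log (f y t))
    - c * ((1 - R t) * k1 t + R t * k2 t) with hΦdef
  have hΦcont : Continuous Φ := by
    rw [hΦdef]
    exact (hρcont.mul (hlogxc.sub hlogyc)).sub (continuous_const.mul
      (((continuous_const.sub hRcont).mul hk1cont).add (hRcont.mul hk2cont)))
  have hlogdint : IntervalIntegrable (fun s => ρ s * (Real.log (f x s) - Real.log (f y s)))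
      volume T₁ T₂ := (hρcont.mul (hlogxc.sub hlogyc)).intervalIntegrable _ _
  have i2 : IntervalIntegrable (fun s => K1 s * ρ s) volume T₁ T₂ :=
    (hK1cont.mul hρcont).intervalIntegrable _ _
  have i3 : IntervalIntegrable (fun s => K2 s * ρ s) volume T₁ T₂ :=
    (hK2cont.mul hρcont).intervalIntegrable _ _
  have i4 : IntervalIntegrable ρ volume T₁ T₂ := hρcont.intervalIntegrable _ _
  have i5 : IntervalIntegrable (fun s => k1 s * R s) volume T₁ T₂ :=
    (hk1cont.mul hRcont).intervalIntegrable _ _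
  have i6 : IntervalIntegrable (fun s => k2 s * R s) volume T₁ T₂ :=
    (hk2cont.mul hRcont).intervalIntegrable _ _
  have i7 : IntervalIntegrable k1 volume T₁ T₂ := hk1cont.intervalIntegrable _ _
  have hJ : ∫ s in T₁..T₂, ρ s * m s = ∫ t in T₁..T₂, Φ t := by
    have eL : ∫ s in T₁..T₂, ρ s * m s
        = (∫ s in T₁..T₂, ρ s * (Real.log (f x s) - Real.log (f y s)))
          - c * (∫ s in T₁..T₂, K1 s * ρ s)
          - (c * K2 T₂) * (∫ s in T₁..T₂, ρ s) + c * (∫ s in T₁..T₂, K2 s * ρ s) := by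
      have hfnL : (fun s => ρ s * m s) = fun s =>
          (((ρ s * (Real.log (f x s) - Real.log (f y s))) - c * (K1 s * ρ s))
            - (c * K2 T₂) * ρ s) + c * (K2 s * ρ s) := by
        funext s
        rw [hmdef]
        simp only
        ring
      rw [hfnL,
        intervalIntegral.integral_add ((hlogdint.sub (i2.const_mul c)).sub
          (i4.const_mul (c * K2 T₂))) (i3.const_mul c),
        intervalIntegral.integral_sub (hlogdint.sub (i2.const_mul c))
          (i4.const_mul (c * K2 T₂)),
        intervalIntegral.integral_sub hlogdint (i2.const_mul c),
        intervalIntegral.integral_const_mul, intervalIntegral.integral_const_mul,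
        intervalIntegral.integral_const_mul]
    have eR : ∫ t in T₁..T₂, Φ t
        = (∫ s in T₁..T₂, ρ s * (Real.log (f x s) - Real.log (f y s)))
          - c * (∫ s in T₁..T₂, k1 s)
          + c * (∫ s in T₁..T₂, k1 s * R s) - c * (∫ s in T₁..T₂, k2 s * R s) := by
      have hfnR : Φ = fun s =>
          (((ρ s * (Real.log (f x s) - Real.log (f y s))) - c * k1 s)
            + c * (k1 s * R s)) - c * (k2 s * R s) := by
        funext s
        rw [hΦdef]
        ring
      rw [hfnR,
        intervalIntegral.integral_sub ((hlogdint.sub (i7.const_mul c)).add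
          (i5.const_mul c)) (i6.const_mul c),
        intervalIntegral.integral_add (hlogdint.sub (i7.const_mul c)) (i5.const_mul c),
        intervalIntegral.integral_sub hlogdint (i7.const_mul c),
        intervalIntegral.integral_const_mul, intervalIntegral.integral_const_mul,
        intervalIntegral.integral_const_mul]
    rw [eL, eR, hIBP1, hIBP2, hρint, hRT₂, hRT₁, hK1T₁, hK2T₁, hK1T₂]
    ring
  -- pointwise bound
  have hptwise : ∀ t ∈ Set.Icc T₁ T₂, Φ t ≤ 2 / (c * L ^ 3) * (T₂ - t) * A t := by
    intro t ht
    obtain ⟨hτ0, hτ1⟩ := hτ01 t ht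
    have hcore := core_aux (c := c) (A := A t) (L := L) (τ := τf t)
      (h := Real.log (f x t) - Real.log (f y t)) hc (hA0 t) hL hτ0 hτ1
    have hexp1 : Real.exp (-(Real.log (f x t) - Real.log (f y t))) = f y t / f x t := by
      rw [neg_sub, Real.exp_sub, Real.exp_log (hf y t), Real.exp_log (hf x t)]
    have hexp2 : Real.exp (Real.log (f x t) - Real.log (f y t)) = f x t / f y t := by
      rw [Real.exp_sub, Real.exp_log (hf x t), Real.exp_log (hf y t)]
    rw [hexp1, hexp2] at hcore
    have hLτ : L * τf t = T₂ - t := by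
      rw [hτdef]
      field_simp
    have hgeq : c * ((1 - R t) * k1 t + R t * k2 t)
        = c / A t * ((1 - R t) * q1 t + R t * q2 t) := by
      rw [hk1def, hk2def]
      simp only
      field_simp
    rw [hΦdef]
    simp only
    rw [hgeq, show (2 : ℝ) / (c * L ^ 3) * (T₂ - t) * A t
        = 2 / (c * L ^ 3) * (L * τf t) * A t by rw [hLτ]]
    rw [hRdef, hq1def, hq2def, hρdef]
    simp only
    exact hcore
  have hbnd2cont : Continuous (fun t => 2 / (c * L ^ 3) * (T₂ - t) * A t) :=
    ((continuous_const.mul (continuous_const.sub continuous_id)).mul hAcont)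
  have hJle : ∫ t in T₁..T₂, Φ t ≤ ∫ t in T₁..T₂, 2 / (c * L ^ 3) * (T₂ - t) * A t :=
    intervalIntegral.integral_mono_on hT' (hΦcont.intervalIntegrable _ _)
      (hbnd2cont.intervalIntegrable _ _) hptwise
  -- minimum of m
  obtain ⟨s₀, hs₀, hmin⟩ := isCompact_Icc.exists_isMinOn (Set.nonempty_Icc.2 hT')
    hmcont.continuousOn
  have hms₀ : m s₀ ≤ ∫ s in T₁..T₂, ρ s * m s := by
    have h6 : ∫ s in T₁..T₂, ρ s * m s₀ ≤ ∫ s in T₁..T₂, ρ s * m s :=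
      intervalIntegral.integral_mono_on hT'
        ((hρcont.mul continuous_const).intervalIntegrable _ _)
        ((hρcont.mul hmcont).intervalIntegrable _ _)
        (fun s hs => mul_le_mul_of_nonneg_left (hmin hs) (hρnn s hs))
    rwa [intervalIntegral.integral_mul_const, hρint, one_mul] at h6
  -- conversions back to α, ψ
  have huIcc : Set.uIcc T₁ T₂ = Set.Icc T₁ T₂ := Set.uIcc_of_le hT'
  have hcoef : 2 / (c * L ^ 3) = 4 * μmax / (ωmin * L ^ 3) := by
    rw [hcdef]
    field_simp
    ring
  have hAI : ∀ s, HasDerivAt (fun v => ∫ t in T₁..v, A t) (A s) s := fun s =>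
    intervalIntegral.integral_hasDerivAt_right (hAcont.intervalIntegrable _ _)
      (hAcont.stronglyMeasurableAtFilter _ _) hAcont.continuousAt
  have hIBP3 : ∫ s in T₁..T₂, (∫ t in T₁..s, A t) * (1 : ℝ)
      = (∫ t in T₁..T₂, A t) * (T₂ - T₂) - (∫ t in T₁..T₁, A t) * (T₁ - T₂)
        - ∫ s in T₁..T₂, A s * (s - T₂) :=
    intervalIntegral.integral_mul_deriv_eq_deriv_mul (fun s _ => hAI s)
      (fun s _ => (hasDerivAt_id s).sub_const T₂) (hAcont.intervalIntegrable _ _)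
      (intervalIntegrable_const)
  have h7 : ∫ s in T₁..T₂, A s * (s - T₂) = - ∫ t in T₁..T₂, (T₂ - t) * A t := by
    rw [← intervalIntegral.integral_neg]
    exact intervalIntegral.integral_congr fun t _ => by ring
  have e4 : ∫ t in T₁..T₂, (T₂ - t) * A t = ∫ s in T₁..T₂, (∫ t in T₁..s, A t) := by
    simp only [mul_one, intervalIntegral.integral_same, sub_self, zero_mul, zero_sub] at hIBP3
    rw [hIBP3, h7]
    ring
  have e7 : ∫ s in T₁..T₂, (∫ t in T₁..s, A t) = ∫ s in T₁..T₂, ∫ u in T₁..s, α u := by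
    apply intervalIntegral.integral_congr
    intro s hs
    rw [huIcc] at hs
    apply intervalIntegral.integral_congr
    intro u hu
    rw [Set.uIcc_of_le hs.1] at hu
    exact hAeq u ⟨hu.1, le_trans hu.2 hs.2⟩
  have e8 : ∫ t in T₁..T₂, Ψ t / A t = ∫ t in T₁..T₂, ψ t / α t := by
    apply intervalIntegral.integral_congr
    intro t ht
    rw [huIcc] at ht
    show Ψ t / A t = ψ t / α t
    rw [hAeq t ht, hΨeq t ht]
  have hCT : ∫ t in T₁..T₂, 2 / (c * L ^ 3) * (T₂ - t) * A t
      = 4 * μmax / (ωmin * L ^ 3) * ∫ s in T₁..T₂, ∫ u in T₁..s, α u := by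
    have h9 : (fun t => 2 / (c * L ^ 3) * (T₂ - t) * A t)
        = fun t => 2 / (c * L ^ 3) * ((T₂ - t) * A t) := funext fun t => by ring
    rw [h9, intervalIntegral.integral_const_mul, e4, e7, hcoef]
  have hfinal := hstepC s₀ hs₀
  rw [e8] at hfinal
  calc Real.log (f x T₁) - Real.log (f y T₂)
      ≤ (∫ t in T₁..T₂, ψ t / α t) + m s₀ := hfinal
    _ ≤ (∫ t in T₁..T₂, ψ t / α t)
        + 4 * μmax / (ωmin * L ^ 3) * ∫ s in T₁..T₂, ∫ u in T₁..s, α u := by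
        have h10 := (hms₀.trans (le_of_eq hJ)).trans hJle
        rw [hCT] at h10
        linarith
end
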